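/- Let Γ be a group with finite symmetric generating set S of size D, and let K ⊆ Γ be a finite nonempty set. Suppose r ≥ 1 is such that for every subset S' ⊆ S of size at least D/2 which generates a subgroup Γ' of Γ, the ball of radius r in Cay(Γ',S') has at least 2|K| elements. Then the edge boundary satisfies |∂_E K| / (D|K|) ≥ 1/(16 r). -/

import Mathlib

/-!
Since the ball of radius `r` around `1` has at least `2|K|` elements, averaging over it gives an
element `w` with `|K w \ K| ≥ |K| / 2`. Writing `w` as a word of length `≤ r` in the generators,
every `x ∈ K` with `x w ∉ K` leaves `K` at some letter of the word, so some letter `g` satisfies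
`|K g \ K| ≥ |K| / (2r)`. Removing the generators found so far keeps more than half of `S` for
`D / 2 + 1` rounds, which yields that many distinct generators, each labelling `|K| / (2r)`
boundary edges; hence in fact `D |K| ≤ 4 r |∂_E K|`.
-/

open scoped Classical

/-- The ball of radius `n` around the identity in the Cayley graph of (the
subgroup generated by) `S`. -/
def cayleyBall {Γ : Type u} [Group Γ] (S : Finset Γ) (n : ℕ) : Set Γ :=
  {x | ∃ l : List Γ, (∀ g ∈ l, g ∈ S) ∧ l.length ≤ n ∧ l.prod = x}

open Finset

section ExitSet

variable {Γ : Type*} [Group Γ]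

noncomputable def exitSet (K : Finset Γ) (g : Γ) : Finset Γ := {x ∈ K | x * g ∉ K}

def edgeBoundary (S K : Finset Γ) : Set (Γ × Γ) :=
  {q | q.1 ∈ K ∧ q.2 ∉ K ∧ ∃ s ∈ S, q.1 * s = q.2}

@[simp]
lemma exitSet_one (K : Finset Γ) : exitSet K 1 = ∅ := by
  simp [exitSet]

lemma card_exitSet_mul_le (K : Finset Γ) (g h : Γ) :
    #(exitSet K (g * h)) ≤ #(exitSet K g) + #(exitSet K h) := by
  have hsub : exitSet K (g * h) ⊆ exitSet K g ∪ (exitSet K h).image (· * g⁻¹) := by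
    intro x hx
    simp only [exitSet, mem_filter, mem_union, mem_image] at hx ⊢
    by_cases hxg : x * g ∈ K
    · exact Or.inr ⟨x * g, ⟨hxg, by rw [mul_assoc]; exact hx.2⟩, by simp⟩
    · exact Or.inl ⟨hx.1, hxg⟩
  calc #(exitSet K (g * h))
      ≤ #(exitSet K g ∪ (exitSet K h).image (· * g⁻¹)) := card_le_card hsub
    _ ≤ #(exitSet K g) + #((exitSet K h).image (· * g⁻¹)) := card_union_le _ _
    _ ≤ #(exitSet K g) + #(exitSet K h) := Nat.add_le_add_left card_image_le _

lemma card_exitSet_list_prod_le (K : Finset Γ) (l : List Γ) :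
    #(exitSet K l.prod) ≤ (l.map fun g => #(exitSet K g)).sum := by
  induction l with
  | nil => simp
  | cons g l ih =>
    rw [List.prod_cons, List.map_cons, List.sum_cons]
    exact (card_exitSet_mul_le K g l.prod).trans (by omega)

lemma exists_mem_card_exitSet_list_prod_le (K : Finset Γ) {l : List Γ} (hl : l ≠ []) :
    ∃ g ∈ l, #(exitSet K l.prod) ≤ l.length * #(exitSet K g) := by
  refine List.exists_le_of_sum_le hl _ _ ?_
  rw [List.map_const', List.sum_replicate, smul_eq_mul, List.sum_map_mul_left]
  exact Nat.mul_le_mul_left _ (card_exitSet_list_prod_le K l)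

lemma sum_card_filter_mul_mem_le (K B : Finset Γ) :
    ∑ w ∈ B, #{x ∈ K | x * w ∈ K} ≤ #K * #K :=
  calc ∑ w ∈ B, #{x ∈ K | x * w ∈ K} = ∑ x ∈ K, #{w ∈ B | x * w ∈ K} := by
        simp only [card_filter]; exact sum_comm
    _ ≤ ∑ _x ∈ K, #K := sum_le_sum fun x _ =>
        card_le_card_of_injOn (x * ·) (fun _ hw => (mem_filter.1 hw).2)
          (mul_right_injective x).injOn
    _ = #K * #K := by rw [sum_const, smul_eq_mul]

lemma exists_card_le_two_mul_card_exitSet {K : Finset Γ} (hK : K.Nonempty) {B : Finset Γ}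
    (hB : 2 * #K ≤ #B) : ∃ w ∈ B, #K ≤ 2 * #(exitSet K w) := by
  have hBne : B.Nonempty := card_pos.1 (by have := hK.card_pos; omega)
  refine exists_le_of_sum_le hBne ?_
  have hsplit : ∑ w ∈ B, #{x ∈ K | x * w ∈ K} + ∑ w ∈ B, #(exitSet K w) = #B * #K := by
    simp only [exitSet, ← sum_add_distrib, card_filter_add_card_filter_not, sum_const,
      smul_eq_mul]
  have hstay := sum_card_filter_mul_mem_le K B
  rw [sum_const, smul_eq_mul, ← mul_sum]
  nlinarith

lemma exists_mem_card_le_card_exitSet_of_card_cayleyBall {K : Finset Γ} (hK : K.Nonempty)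
    {S : Finset Γ} {r : ℕ} (hball : 2 * #K ≤ Nat.card (cayleyBall S r)) :
    ∃ g ∈ S, #K ≤ 2 * r * #(exitSet K g) := by
  have hfin : (cayleyBall S r).Finite := Set.finite_of_ncard_ne_zero <| by
    rw [← Nat.card_coe_set_eq]; have := hK.card_pos; omega
  obtain ⟨w, hw, hKw⟩ := exists_card_le_two_mul_card_exitSet hK (B := hfin.toFinset) <| by
    rwa [← Set.ncard_eq_toFinset_card _ hfin, ← Nat.card_coe_set_eq]
  obtain ⟨l, hlS, hlen, rfl⟩ := hfin.mem_toFinset.1 hw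
  have hl : l ≠ [] := by
    rintro rfl
    simp only [List.prod_nil, exitSet_one, card_empty, mul_zero, Nat.le_zero, card_eq_zero] at hKw
    exact hK.ne_empty hKw
  obtain ⟨g, hg, hlg⟩ := exists_mem_card_exitSet_list_prod_le K hl
  refine ⟨g, hlS g hg, ?_⟩
  calc #K ≤ 2 * #(exitSet K l.prod) := hKw
    _ ≤ 2 * (l.length * #(exitSet K g)) := by gcongr
    _ ≤ 2 * r * #(exitSet K g) := by rw [mul_assoc]; gcongr

lemma sum_card_exitSet_le_ncard_edgeBoundary {S K T : Finset Γ} (hTS : T ⊆ S) :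
    ∑ g ∈ T, #(exitSet K g) ≤ (edgeBoundary S K).ncard := by
  have hfin : (edgeBoundary S K).Finite :=
    ((K : Set Γ).toFinite.prod ((K : Set Γ).toFinite.mul (S : Set Γ).toFinite)).subset
      fun q ⟨hq, _, s, hs, hqs⟩ => ⟨hq, hqs ▸ Set.mul_mem_mul hq hs⟩
  rw [← card_sigma, ← Set.ncard_coe_finset]
  refine Set.ncard_le_ncard_of_injOn (fun p => (p.2, p.2 * p.1)) ?_ ?_ hfin
  · rintro ⟨g, x⟩ hp
    simp only [coe_sigma, Set.mem_sigma_iff, mem_coe, exitSet, mem_filter] at hp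
    exact ⟨hp.2.1, hp.2.2, g, hTS hp.1, rfl⟩
  · rintro ⟨g, x⟩ _ ⟨g', x'⟩ _ h
    simp only [Prod.mk.injEq] at h
    obtain ⟨rfl, h⟩ := h
    rw [mul_left_cancel h]

end ExitSet

lemma exists_subset_card_eq_forall_of_forall_half {α : Type*} {S : Finset α} {p : α → Prop}
    (h : ∀ S' ⊆ S, #S ≤ 2 * #S' → ∃ g ∈ S', p g) {n : ℕ} (hn : 2 * n ≤ #S + 2) :
    ∃ T ⊆ S, #T = n ∧ ∀ g ∈ T, p g := by
  induction n with
  | zero => exact ⟨∅, empty_subset _, card_empty, by simp⟩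
  | succ n ih =>
    obtain ⟨T, hTS, hT, hpT⟩ := ih (by omega)
    obtain ⟨g, hg, hpg⟩ := h (S \ T) sdiff_subset (by rw [card_sdiff_of_subset hTS]; omega)
    rw [mem_sdiff] at hg
    exact ⟨insert g T, insert_subset hg.1 hTS, by rw [card_insert_of_notMem hg.2, hT],
      (forall_mem_insert _ _ _).2 ⟨hpg, hpT⟩⟩

theorem edge_isoperimetry_general
    {Γ : Type*} [Group Γ] (S : Finset Γ) (D : ℕ) (hD : S.card = D)
    (K : Finset Γ) (hK : K.Nonempty)
    (r : ℕ)
    (hball : ∀ S' : Finset Γ, S' ⊆ S → (D : ℝ) / 2 ≤ S'.card →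
      2 * K.card ≤ Nat.card (cayleyBall S' r)) :
    (1 : ℝ) / (16 * r) ≤
      (Set.ncard {q : Γ × Γ | q.1 ∈ K ∧ q.2 ∉ K ∧ ∃ s ∈ S, q.1 * s = q.2} : ℝ) /
        (D * K.card) := by
  subst hD
  obtain ⟨T, hTS, hT, hgood⟩ :=
    exists_subset_card_eq_forall_of_forall_half (n := #S / 2 + 1)
      (p := fun g => #K ≤ 2 * r * #(exitSet K g))
      (fun S' hS' hhalf => exists_mem_card_le_card_exitSet_of_card_cayleyBall hK <|
        hball S' hS' <| by rw [div_le_iff₀ two_pos]; exact_mod_cast (by omega : #S ≤ #S' * 2))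
      (by omega)
  have hcount : #S * #K ≤ 4 * r * (edgeBoundary S K).ncard :=
    calc #S * #K ≤ 2 * ∑ _g ∈ T, #K := by
          rw [sum_const, smul_eq_mul, hT, ← mul_assoc]; gcongr; omega
      _ ≤ 2 * ∑ g ∈ T, 2 * r * #(exitSet K g) := by gcongr with g hg; exact hgood g hg
      _ ≤ 4 * r * (edgeBoundary S K).ncard := by
          rw [← mul_sum, ← mul_assoc]
          exact Nat.mul_le_mul (by omega) (sum_card_exitSet_le_ncard_edgeBoundary hTS)
  have hpos : 0 < #S * #K := Nat.mul_pos (by have := card_le_card hTS; omega) hK.card_pos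
  have hr : 0 < r := Nat.pos_of_ne_zero fun h => by rw [h, mul_zero, zero_mul] at hcount; omega
  rw [div_le_div_iff₀ (by positivity) (by exact_mod_cast hpos), one_mul]
  exact_mod_cast (by linarith : #S * #K ≤ (edgeBoundary S K).ncard * (16 * r))

/-- Edge isoperimetric inequality: if every subgroup generated by at least half
of the generators has ball of radius `r` of size at least `2|K|`, then
`|∂_E K| / (D|K|) ≥ 1/(16 r)`. -/
theorem edge_isoperimetry
    {Γ : Type*} [Group Γ] (S : Finset Γ) (D : ℕ) (hD : S.card = D) (hDpos : 1 ≤ D)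
    (hsymm : ∀ s ∈ S, s⁻¹ ∈ S)
    (hgen : Subgroup.closure (S : Set Γ) = ⊤)
    (K : Finset Γ) (hK : K.Nonempty)
    (r : ℕ) (hr : 1 ≤ r)
    (hball : ∀ S' : Finset Γ, S' ⊆ S → (D : ℝ) / 2 ≤ S'.card →
      2 * K.card ≤ Nat.card (cayleyBall S' r)) :
    (1 : ℝ) / (16 * r) ≤
      (Set.ncard {q : Γ × Γ | q.1 ∈ K ∧ q.2 ∉ K ∧ ∃ s ∈ S, q.1 * s = q.2} : ℝ) /
        (D * K.card) :=
  edge_isoperimetry_general S D hD K hK r hball
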